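/- Let G be a signed complete graph whose vertices each have one of |𝒞| colors c₁,…,c_{|𝒞|}, with |V_{c_i}| = p_i·|V_{c₁}| for positive integers p_i (i ≥ 2), and let C be a clustering of G in which every cluster has color distribution equal to the global distribution. Then for each i ≥ 2 there exists a b-matching M_i from V_{c_i} to V_{c₁} (each c₁-vertex matched to exactly p_i vertices of color c_i, each c_i-vertex matched once) with matched pairs in the same cluster of C, satisfying weight(M_i) ≤ 2·p_i·d(C), where d(C) is the number of disagreements of C. -/

import Mathlib

open Finset

/-- An edge `{u,v}` is a disagreement of clustering `c`: negative inside a cluster,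
or positive between clusters. `sign u v = true` means positive. -/
def isDis {V : Type*} (sign : V → V → Bool) (c : V → ℕ) (u v : V) : Bool :=
  if c u = c v then !(sign u v) else sign u v

/-- Number of disagreements of a clustering (unordered edges). -/
def numDis {V : Type*} [Fintype V] [DecidableEq V] (sign : V → V → Bool) (c : V → ℕ) : ℕ :=
  ((Finset.univ : Finset (V × V)).filter
    (fun p => p.1 ≠ p.2 ∧ isDis sign c p.1 p.2 = true)).card / 2

/-- Weight of a matched pair `(u,v)`: number of vertices `w ≠ u,v` on which the
signs to `u` and `v` differ, plus `1` if `(u,v)` is negative. -/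
def pairW {V : Type*} [Fintype V] [DecidableEq V] (sign : V → V → Bool) (u v : V) : ℕ :=
  ((Finset.univ : Finset V).filter
    (fun w => w ≠ u ∧ w ≠ v ∧ sign u w ≠ sign v w)).card
  + (if sign u v = false then 1 else 0)

/-! The matching is built cluster by cluster: inside each cluster the `cᵢ`-vertices are split
into blocks of `pᵢ`, one block per `c₁`-vertex. If `u` and `v` lie in a common cluster, every
vertex counted in the weight of `(u, v)`, and the edge `uv` itself when it is negative, is a
disagreement at `u` or at `v`; so the weight is at most `deg u + deg v` in the disagreement graph.
Summing over the matching, each `c₁`-vertex occurs `pᵢ` times, so the total weight is at most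
`pᵢ` times the degree sum of the disagreement graph, which is `2 d(C)` by the handshake lemma. -/

theorem exists_fiber_card_eq_of_card_eq_mul {α : Type*} [DecidableEq α] (n : ℕ)
    (A B : Finset α) (hA : #A = n * #B) :
    ∃ g : α → α, (∀ a ∈ A, g a ∈ B) ∧ ∀ b ∈ B, #{a ∈ A | g a = b} = n := by
  induction B using Finset.induction_on generalizing A with
  | empty =>
    rw [card_empty, mul_zero, card_eq_zero] at hA
    exact ⟨id, by simp [hA], by simp⟩
  | insert b B hb ih =>
    rw [card_insert_of_notMem hb, mul_add_one] at hA
    obtain ⟨S, hSA, hS⟩ := exists_subset_card_eq (show n ≤ #A by omega)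
    obtain ⟨g, hgB, hgfib⟩ := ih (A \ S) (by rw [card_sdiff_of_subset hSA]; omega)
    refine ⟨fun a => if a ∈ S then b else g a, fun a ha => ?_, fun b' hb' => ?_⟩
    · have := hgB a
      grind
    rcases mem_insert.1 hb' with rfl | hb'B
    · convert hS using 2
      ext a
      have := hgB a
      grind
    · rw [← hgfib b' hb'B]
      congr 1
      ext a
      grind

theorem exists_fiber_card_eq_of_forall_card_eq_mul {α κ : Type*} [DecidableEq α] [DecidableEq κ]
    (n : ℕ) (A B : Finset α) (c : α → κ)
    (h : ∀ k, #{a ∈ A | c a = k} = n * #{b ∈ B | c b = k}) :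
    ∃ g : α → α, (∀ a ∈ A, g a ∈ B) ∧ (∀ a ∈ A, c (g a) = c a) ∧
      ∀ b ∈ B, #{a ∈ A | g a = b} = n := by
  choose g hgB hgfib using fun k => exists_fiber_card_eq_of_card_eq_mul n _ _ (h k)
  have hmem : ∀ a ∈ A, g (c a) a ∈ B ∧ c (g (c a) a) = c a := fun a ha =>
    by simpa using hgB (c a) a (by simp [ha])
  refine ⟨fun a => g (c a) a, fun a ha => (hmem a ha).1, fun a ha => (hmem a ha).2,
    fun b hb => ?_⟩
  rw [← hgfib (c b) b (by simp [hb])]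
  congr 1
  ext a
  have := hmem a
  grind

theorem sum_comp_eq_nsmul_sum_of_fiber_card_eq {α M : Type*} [DecidableEq α] [AddCommMonoid M]
    {A B : Finset α} {g : α → α} {n : ℕ} (hgB : ∀ a ∈ A, g a ∈ B)
    (hfib : ∀ b ∈ B, #{a ∈ A | g a = b} = n) (w : α → M) :
    ∑ a ∈ A, w (g a) = n • ∑ b ∈ B, w b := by
  rw [← sum_fiberwise_of_maps_to hgB, smul_sum]
  refine sum_congr rfl fun b hb => ?_
  rw [sum_congr rfl fun a ha => congrArg w (mem_filter.1 ha).2, sum_const, hfib b hb]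

section Disagreement

variable {V : Type*} {sign : V → V → Bool} {c : V → ℕ}

theorem isDis_comm (hsym : ∀ u v, sign u v = sign v u) (u v : V) :
    isDis sign c u v = isDis sign c v u := by
  simp only [isDis, eq_comm (a := c u), hsym u v]

theorem isDis_or_isDis_of_sign_ne {u v w : V} (hc : c u = c v) (hs : sign u w ≠ sign v w) :
    isDis sign c u w = true ∨ isDis sign c v w = true := by
  unfold isDis
  rw [hc]
  revert hs
  split_ifs <;> cases sign u w <;> cases sign v w <;> simp

-- `fromRel` symmetrises the relation, so no symmetry of `sign` is needed to form the graph.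
variable (sign c) in
abbrev disGraph : SimpleGraph V :=
  SimpleGraph.fromRel fun u v => isDis sign c u v = true

theorem disGraph_adj (hsym : ∀ u v, sign u v = sign v u) (u v : V) :
    (disGraph sign c).Adj u v ↔ u ≠ v ∧ isDis sign c u v = true := by
  simp [isDis_comm hsym v u]

variable [Fintype V] [DecidableEq V]

theorem sum_degree_disGraph (hsym : ∀ u v, sign u v = sign v u) :
    ∑ u, (disGraph sign c).degree u = 2 * numDis sign c := by
  have hdarts : #{q : V × V | q.1 ≠ q.2 ∧ isDis sign c q.1 q.2 = true}
      = ∑ u, (disGraph sign c).degree u := by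
    simp only [← SimpleGraph.card_neighborFinset_eq_degree, SimpleGraph.neighborFinset_eq_filter,
      disGraph_adj hsym, card_filter, Fintype.sum_prod_type]
  rw [numDis, hdarts, SimpleGraph.sum_degrees_eq_twice_card_edges]
  omega

theorem pairW_le_degree_add_degree {u v : V} (hne : u ≠ v) (hc : c u = c v) :
    pairW sign u v ≤ (disGraph sign c).degree u + (disGraph sign c).degree v := by
  set N := (disGraph sign c).neighborFinset
  have hsub :
      ({w | w ≠ u ∧ w ≠ v ∧ sign u w ≠ sign v w} : Finset V) ⊆ (N u).erase v ∪ N v := by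
    intro w hw
    simp only [mem_filter, mem_univ, true_and] at hw
    obtain ⟨hwu, hwv, hs⟩ := hw
    rcases isDis_or_isDis_of_sign_ne hc hs with h | h
    · simp [N, hwv, hwu.symm, h]
    · simp [N, hwv.symm, h]
  have herase : #((N u).erase v) + (if sign u v = false then 1 else 0) ≤ #(N u) := by
    split_ifs with hs
    · exact (card_erase_add_one (by simp [N, hne, isDis, hc, hs])).le
    · exact card_erase_le
  calc pairW sign u v
      ≤ #((N u).erase v) + #(N v) + (if sign u v = false then 1 else 0) :=
        Nat.add_le_add_right ((card_le_card hsub).trans (card_union_le _ _)) _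
    _ ≤ _ := by simp only [N, SimpleGraph.card_neighborFinset_eq_degree] at herase ⊢; omega

end Disagreement

theorem stmt15_general {V : Type*} [Fintype V] [DecidableEq V]
    (sign : V → V → Bool) (hsym : ∀ u v, sign u v = sign v u)
    (m : ℕ) (hm : 0 < m) (col : V → Fin m) (p : Fin m → ℕ) (hp : ∀ i, 1 ≤ p i)
    (c : V → ℕ)
    (hfair : ∀ (i : Fin m), i ≠ ⟨0, hm⟩ → ∀ k,
      (univ.filter fun v => col v = i ∧ c v = k).card
        = p i * (univ.filter fun v => col v = (⟨0, hm⟩ : Fin m) ∧ c v = k).card) :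
    ∀ i : Fin m, i ≠ ⟨0, hm⟩ →
      ∃ f : V → V,
        (∀ u, col u = i → col (f u) = ⟨0, hm⟩) ∧
        (∀ r, col r = ⟨0, hm⟩ →
          (univ.filter fun u => col u = i ∧ f u = r).card = p i) ∧
        (∀ u, col u = i → c (f u) = c u) ∧
        ∑ u ∈ univ.filter (fun v => col v = i), pairW sign u (f u)
          ≤ 2 * p i * numDis sign c := by
  intro i hi
  set A : Finset V := {v | col v = i}
  set B : Finset V := {v | col v = ⟨0, hm⟩}
  obtain ⟨f, hfB, hfc, hfib⟩ := exists_fiber_card_eq_of_forall_card_eq_mul (p i) A B c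
    fun k => by simpa only [A, B, filter_filter] using hfair i hi k
  have hfcol : ∀ u, col u = i → col (f u) = ⟨0, hm⟩ := fun u hu =>
    (mem_filter.1 (hfB u (by simpa [A] using hu))).2
  refine ⟨f, hfcol,
    fun r hr => by simpa only [A, filter_filter] using hfib r (by simpa [B] using hr),
    fun u hu => hfc u (by simpa [A] using hu), ?_⟩
  have hAB : Disjoint A B := disjoint_filter.2 fun u _ hu h0 => hi (hu ▸ h0)
  set G := disGraph sign c
  calc ∑ u ∈ A, pairW sign u (f u)
      ≤ ∑ u ∈ A, (G.degree u + G.degree (f u)) := sum_le_sum fun u hu => by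
        have hui : col u = i := (mem_filter.1 hu).2
        refine pairW_le_degree_add_degree (fun h => hi ?_) (hfc u hu).symm
        rw [← hui, h, hfcol u hui]
    _ = ∑ u ∈ A, G.degree u + p i * ∑ u ∈ B, G.degree u := by
        rw [sum_add_distrib,
          sum_comp_eq_nsmul_sum_of_fiber_card_eq hfB hfib fun u => G.degree u, smul_eq_mul]
    _ ≤ p i * ∑ u ∈ A ∪ B, G.degree u := by
        rw [sum_union hAB, mul_add]
        exact Nat.add_le_add_right (Nat.le_mul_of_pos_left _ (hp i)) _
    _ ≤ p i * ∑ u, G.degree u := by gcongr; exact subset_univ _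
    _ = 2 * p i * numDis sign c := by rw [sum_degree_disGraph hsym]; ring

/-- multi-color version — for a clustering with the global color
distribution in each cluster, for every non-base color there is a b-matching to
the base color, inside clusters, of weight at most 2·p_i·d(C). -/
theorem stmt15 {V : Type*} [Fintype V] [DecidableEq V]
    (sign : V → V → Bool) (hsym : ∀ u v, sign u v = sign v u)
    (m : ℕ) (hm : 0 < m) (col : V → Fin m) (p : Fin m → ℕ) (hp : ∀ i, 1 ≤ p i)
    (c : V → ℕ)
    (hglob : ∀ i : Fin m, i ≠ ⟨0, hm⟩ →
      (univ.filter fun v => col v = i).card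
        = p i * (univ.filter fun v => col v = (⟨0, hm⟩ : Fin m)).card)
    (hfair : ∀ (i : Fin m), i ≠ ⟨0, hm⟩ → ∀ k,
      (univ.filter fun v => col v = i ∧ c v = k).card
        = p i * (univ.filter fun v => col v = (⟨0, hm⟩ : Fin m) ∧ c v = k).card) :
    ∀ i : Fin m, i ≠ ⟨0, hm⟩ →
      ∃ f : V → V,
        (∀ u, col u = i → col (f u) = ⟨0, hm⟩) ∧
        (∀ r, col r = ⟨0, hm⟩ →
          (univ.filter fun u => col u = i ∧ f u = r).card = p i) ∧
        (∀ u, col u = i → c (f u) = c u) ∧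
        ∑ u ∈ univ.filter (fun v => col v = i), pairW sign u (f u)
          ≤ 2 * p i * numDis sign c :=
  stmt15_general sign hsym m hm col p hp c hfair
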